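/- arXiv:2508.01809 — 3 statements merged into one kernel-verified Lean document; each statement's English description precedes it below -/
import Mathlib

section
/- Let N ≥ 2, 0 < r < R, a ∈ [−1, −(r/R)^{N−1}). For s ∈ [r, R], the function ρ(s) = (aR^{N−1}+r^{N−1})s/(R^N−r^N) − r^{N−1}R^{N−1}(ar+R) s^{1−N}/(R^N−r^N) satisfies ρ(s) ≥ −1; equivalently, the polynomial p₁(s) = (aR^{N−1}+r^{N−1})s^N + (R^N−r^N)s^{N−1} − r^{N−1}R^{N−1}(ar+R) is nonnegative on [r, R]. -/
/-! `(R^N - r^N) (ρ(s) + 1)` is linear minus a nonnegative multiple of the convex `s^{1-N}`,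
hence concave on `(0, ∞)`. It vanishes at `s = r` and equals `(a + 1)(R^N - r^N) ≥ 0` at
`s = R`, so it is nonnegative on `[r, R]`; multiplying by `s^{N-1}` gives `p₁`. -/

/-- ρ(s) = (aR^{N-1}+r^{N-1})/(R^N-r^N) · s - r^{N-1}R^{N-1}(ar+R)/(R^N-r^N) · s^{1-N}. -/
noncomputable def rho5 (N : ℕ) (r R a : ℝ) (s : ℝ) : ℝ :=
  (a*R^(N-1) + r^(N-1))/(R^N - r^N) * s -
    (r^(N-1) * R^(N-1) * (a*r + R))/(R^N - r^N) * s ^ (1 - (N:ℤ))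

lemma concaveOn_affine_sub_zpow (c b : ℝ) {K : ℝ} (hK : 0 ≤ K) (m : ℤ) :
    ConcaveOn ℝ (Set.Ioi 0) fun s : ℝ => c * s + b - K * s ^ m :=
  ((LinearMap.mul ℝ ℝ c).concaveOn (convex_Ioi 0) |>.add_const b).sub ((convexOn_zpow m).smul hK)

lemma ConcaveOn.nonneg_of_mem_Icc {f : ℝ → ℝ} {x y : ℝ} (hxy : x ≤ y)
    (hf : ConcaveOn ℝ (Set.Icc x y) f) (hx : 0 ≤ f x) (hy : 0 ≤ f y) :
    ∀ s ∈ Set.Icc x y, 0 ≤ f s := fun s hs =>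
  (le_min hx hy).trans <| hf.ge_on_segment (Set.left_mem_Icc.2 hxy) (Set.right_mem_Icc.2 hxy)
    (by rwa [segment_eq_Icc hxy])

noncomputable def rhoNumerator (N : ℕ) (r R a s : ℝ) : ℝ :=
  (a * R^(N-1) + r^(N-1)) * s + (R^N - r^N) - r^(N-1) * R^(N-1) * (a*r + R) * s ^ (1 - (N:ℤ))

section
variable {N : ℕ} {r R a : ℝ}

lemma rho5_add_one (h : R^N - r^N ≠ 0) (s : ℝ) :
    rho5 N r R a s + 1 = rhoNumerator N r R a s / (R^N - r^N) := by
  rw [rho5, rhoNumerator]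
  field_simp
  ring

lemma rhoNumerator_left (hN : N ≠ 0) (hr : r ≠ 0) : rhoNumerator N r R a r = 0 := by
  rw [rhoNumerator, zpow_one_sub_natCast₀ hr, ← pow_sub_one_mul hN r, ← pow_sub_one_mul hN R]
  field_simp
  ring

lemma rhoNumerator_right (hN : N ≠ 0) (hR : R ≠ 0) :
    rhoNumerator N r R a R = (a + 1) * (R^N - r^N) := by
  rw [rhoNumerator, zpow_one_sub_natCast₀ hR, ← pow_sub_one_mul hN r, ← pow_sub_one_mul hN R]
  field_simp
  ring

lemma pow_mul_rhoNumerator (hN : N ≠ 0) {s : ℝ} (hs : s ≠ 0) :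
    s^(N-1) * rhoNumerator N r R a s =
      (a*R^(N-1) + r^(N-1))*s^N + (R^N - r^N)*s^(N-1) - r^(N-1)*R^(N-1)*(a*r + R) := by
  rw [rhoNumerator, zpow_one_sub_natCast₀ hs, ← pow_sub_one_mul hN s]
  field_simp

lemma rhoNumerator_nonneg (hN : N ≠ 0) (hr : 0 < r) (hrR : r < R) (ha : -1 ≤ a) :
    ∀ s ∈ Set.Icc r R, 0 ≤ rhoNumerator N r R a s := by
  have hR : 0 < R := hr.trans hrR
  have hK : 0 ≤ r^(N-1) * R^(N-1) * (a*r + R) := by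
    have : 0 ≤ a * r + R := by nlinarith
    positivity
  have hb : 0 ≤ R^N - r^N := sub_nonneg.2 (pow_le_pow_left₀ hr.le hrR.le N)
  refine ConcaveOn.nonneg_of_mem_Icc hrR.le ?_ (rhoNumerator_left hN hr.ne').ge ?_
  · exact (concaveOn_affine_sub_zpow _ _ hK _).subset (Set.Icc_subset_Ioi_iff hrR.le |>.2 hr)
      (convex_Icc r R)
  · rw [rhoNumerator_right hN hR.ne']
    exact mul_nonneg (neg_le_iff_add_nonneg.1 ha) hb

end

theorem stmt7_general (N : ℕ) (hN : 2 ≤ N) (r R a : ℝ) (hr : 0 < r) (hrR : r < R)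
    (ha : -1 ≤ a) :
    ∀ s ∈ Set.Icc r R,
      -1 ≤ rho5 N r R a s ∧
      0 ≤ (a*R^(N-1) + r^(N-1))*s^N + (R^N - r^N)*s^(N-1) - r^(N-1)*R^(N-1)*(a*r + R) := by
  have hN0 : N ≠ 0 := by omega
  have hb : 0 < R^N - r^N := sub_pos.2 (pow_lt_pow_left₀ hrR hr.le hN0)
  intro s hs
  have hq := rhoNumerator_nonneg hN0 hr hrR ha s hs
  refine ⟨?_, ?_⟩
  · rw [neg_le_iff_add_nonneg, rho5_add_one hb.ne']
    exact div_nonneg hq hb.le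
  · rw [← pow_mul_rhoNumerator hN0 (hr.trans_le hs.1).ne']
    exact mul_nonneg (pow_nonneg (hr.le.trans hs.1) _) hq

/-- for N ≥ 2, 0 < r < R, a ∈ [-1, -(r/R)^{N-1}), ρ(s) ≥ -1 on [r,R];
equivalently p₁(s) = (aR^{N-1}+r^{N-1})s^N + (R^N-r^N)s^{N-1} - r^{N-1}R^{N-1}(ar+R)
is nonnegative on [r,R]. -/
theorem stmt7 (N : ℕ) (hN : 2 ≤ N) (r R a : ℝ) (hr : 0 < r) (hrR : r < R)
    (ha : -1 ≤ a) (ha' : a < -(r/R)^(N-1)) :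
    ∀ s ∈ Set.Icc r R,
      -1 ≤ rho5 N r R a s ∧
      0 ≤ (a*R^(N-1) + r^(N-1))*s^N + (R^N - r^N)*s^(N-1) - r^(N-1)*R^(N-1)*(a*r + R) :=
  stmt7_general N hN r R a hr hrR ha
end

section
/- The function t(r) = (128 − 109·2^{1/4}(1−r)^{1/4} − 32 r − 12 r²)/(84 (1−r)^{1/4} r) is strictly increasing on [1/2, 1), satisfies t(1/2) = 0, and t(r) → +∞ as r → 1⁻. Consequently, for every t₀ ≥ 0 there exists a unique r ∈ [1/2, 1) with t(r) = t₀. -/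
/-!
Up to a positive factor, `t'(r)` is `109·(2(1-r))^{1/4}(1-r) + 9r³ - 20r² + 160r - 128`.
For `x = 2(1-r) ∈ (0, 1]` the quarter root dominates `√x`, which by AM-GM is at least
`2x/(1+x)`; this reduces the positivity of `t'` on `[1/2, 1)` to a quartic polynomial
inequality. As `r → 1⁻` the numerator of `t` tends to `84` while its denominator tends to `0⁺`.
Existence and uniqueness of the solution of `t(r) = t₀` then follow from the intermediate value
theorem and monotonicity.
-/

open Real Filter

/-- t(r) = (128 - 109·2^{1/4}(1-r)^{1/4} - 32r - 12r²)/(84(1-r)^{1/4} r). -/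
noncomputable def tFun (r : ℝ) : ℝ :=
  (128 - 109 * 2 ^ ((1:ℝ)/4) * (1 - r) ^ ((1:ℝ)/4) - 32*r - 12*r^2) /
    (84 * (1 - r) ^ ((1:ℝ)/4) * r)

open Set Topology

theorem StrictMonoOn.existsUnique_eq_of_tendsto_atTop {α δ : Type*}
    [ConditionallyCompleteLinearOrder α] [TopologicalSpace α] [OrderTopology α]
    [DenselyOrdered α]
    [LinearOrder δ] [TopologicalSpace δ] [OrderClosedTopology δ]
    {f : α → δ} {a b : α} {y : δ} (hab : a < b) (hf : ContinuousOn f (Ico a b))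
    (hmono : StrictMonoOn f (Ico a b)) (htop : Tendsto f (𝓝[<] b) atTop) (hy : f a ≤ y) :
    ∃! x, x ∈ Ico a b ∧ f x = y := by
  have : (𝓝[<] b).NeBot := nhdsLT_neBot_of_exists_lt ⟨a, hab⟩
  obtain ⟨c, hyc, hc⟩ : ∃ c, y ≤ f c ∧ c ∈ Ioo a b :=
    ((htop.eventually_ge_atTop y).and (Ioo_mem_nhdsLT hab)).exists
  have hsub : Icc a c ⊆ Ico a b := Icc_subset_Ico_right hc.2
  obtain ⟨x, hx, rfl⟩ := intermediate_value_Icc hc.1.le (hf.mono hsub) ⟨hy, hyc⟩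
  exact ⟨x, ⟨hsub hx, rfl⟩, fun z hz => hmono.injOn hz.1 (hsub hx) hz.2⟩

theorem two_mul_le_rpow_mul_one_add {x p : ℝ} (hx0 : 0 ≤ x) (hx1 : x ≤ 1) (hp : p ≤ 1/2) :
    2 * x ≤ x ^ p * (1 + x) := by
  have hsqrt : √x ≤ x ^ p := by
    rcases hx0.eq_or_lt with rfl | hx0
    · simpa using rpow_nonneg le_rfl p
    rw [sqrt_eq_rpow]
    exact rpow_le_rpow_of_exponent_ge hx0 hx1 hp
  have amgm : 2 * x ≤ √x * (1 + x) := by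
    nlinarith [sq_sqrt hx0, sqrt_nonneg x, mul_nonneg (sqrt_nonneg x) (sq_nonneg (√x - 1))]
  nlinarith

noncomputable def tFunDeriv (r : ℝ) : ℝ :=
  (109 * 2 ^ ((1:ℝ)/4) * (1 - r) ^ ((1:ℝ)/4) * (1 - r) + (9*r^3 - 20*r^2 + 160*r - 128)) /
    (84 * (1 - r) ^ ((1:ℝ)/4) * (1 - r) * r^2)

theorem hasDerivAt_one_sub_rpow {r p : ℝ} (hr : r < 1) :
    HasDerivAt (fun s => (1 - s) ^ p) (-p * (1 - r) ^ p / (1 - r)) r := by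
  have h1r : (0:ℝ) < 1 - r := by linarith
  convert ((hasDerivAt_id' r).const_sub 1).rpow_const (p := p) (Or.inl h1r.ne') using 1
  rw [rpow_sub_one h1r.ne']
  ring

theorem hasDerivAt_tFun {r : ℝ} (hr0 : 0 < r) (hr1 : r < 1) :
    HasDerivAt tFun (tFunDeriv r) r := by
  have h1r : (0:ℝ) < 1 - r := by linarith
  have hw : 0 < (1 - r) ^ ((1:ℝ)/4) := rpow_pos_of_pos h1r _
  have hw' := hasDerivAt_one_sub_rpow (p := (1:ℝ)/4) hr1
  have hN :
      HasDerivAt (fun s => 128 - 109 * 2 ^ ((1:ℝ)/4) * (1 - s) ^ ((1:ℝ)/4) - 32*s - 12*s^2)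
      (-(109 * 2 ^ ((1:ℝ)/4) * (-(1/4) * (1 - r) ^ ((1:ℝ)/4) / (1 - r))) - 32 - 24 * r) r := by
    refine ((((hw'.const_mul _).const_sub 128).sub ((hasDerivAt_id' r).const_mul 32)).sub
      ((hasDerivAt_pow 2 r).const_mul 12)).congr_deriv ?_
    ring
  have hD : HasDerivAt (fun s => 84 * (1 - s) ^ ((1:ℝ)/4) * s)
      (84 * (-(1/4) * (1 - r) ^ ((1:ℝ)/4) / (1 - r)) * r + 84 * (1 - r) ^ ((1:ℝ)/4)) r := by
    exact ((hw'.const_mul 84).mul (hasDerivAt_id' r)).congr_deriv (by ring)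
  refine (hN.div hD (by positivity)).congr_deriv ?_
  rw [tFunDeriv]
  field_simp
  ring

theorem tFunDeriv_numerator_pos {r : ℝ} (hr0 : 1/2 ≤ r) (hr1 : r < 1) :
    0 < 109 * 2 ^ ((1:ℝ)/4) * (1 - r) ^ ((1:ℝ)/4) * (1 - r) +
      (9*r^3 - 20*r^2 + 160*r - 128) := by
  have h1r : (0:ℝ) < 1 - r := by linarith
  have hroot : 2 * (2 * (1 - r)) ≤ 2 ^ ((1:ℝ)/4) * (1 - r) ^ ((1:ℝ)/4) * (3 - 2 * r) := by
    rw [← mul_rpow zero_le_two h1r.le]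
    convert two_mul_le_rpow_mul_one_add (x := 2 * (1 - r)) (by linarith) (by linarith)
      (by norm_num : (1:ℝ)/4 ≤ 1/2) using 2
    ring
  have hpoly : 0 < 436 * (1 - r)^2 + (9*r^3 - 20*r^2 + 160*r - 128) * (3 - 2*r) := by
    nlinarith [mul_nonneg (sub_nonneg.2 hr0) h1r.le, sq_nonneg (r - 2/3)]
  nlinarith [mul_le_mul_of_nonneg_left hroot (by positivity : (0:ℝ) ≤ 109 * (1 - r))]

theorem tFunDeriv_pos {r : ℝ} (hr0 : 1/2 ≤ r) (hr1 : r < 1) : 0 < tFunDeriv r := by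
  have h1r : (0:ℝ) < 1 - r := by linarith
  have hr : 0 < r := by linarith
  exact div_pos (tFunDeriv_numerator_pos hr0 hr1) (by positivity)

theorem continuousOn_tFun : ContinuousOn tFun (Ico (1/2) 1) := fun r hr =>
  (hasDerivAt_tFun (by linarith [hr.1]) hr.2).continuousAt.continuousWithinAt

theorem strictMonoOn_tFun : StrictMonoOn tFun (Ico (1/2) 1) := by
  refine strictMonoOn_of_hasDerivWithinAt_pos (f' := tFunDeriv) (convex_Ico _ _)
    continuousOn_tFun ?_ ?_ <;> rw [interior_Ico] <;> intro r hr
  · exact (hasDerivAt_tFun (by linarith [hr.1]) hr.2).hasDerivWithinAt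
  · exact tFunDeriv_pos hr.1.le hr.2

theorem tFun_half : tFun (1/2) = 0 := by
  have h : (2:ℝ) ^ ((1:ℝ)/4) * (1 - 1/2) ^ ((1:ℝ)/4) = 1 := by
    rw [← mul_rpow (by norm_num) (by norm_num)]
    norm_num
  rw [tFun, mul_assoc, h]
  norm_num

theorem tendsto_tFun_nhdsLT_one : Tendsto tFun (𝓝[<] 1) atTop := by
  have hN :
      Tendsto (fun r : ℝ => 128 - 109 * 2 ^ ((1:ℝ)/4) * (1 - r) ^ ((1:ℝ)/4) - 32*r - 12*r^2)
        (𝓝[<] 1) (𝓝 84) :=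
    tendsto_nhdsWithin_of_tendsto_nhds <|
      Continuous.tendsto' (by fun_prop (disch := norm_num)) 1 84 (by norm_num)
  have hD : Tendsto (fun r : ℝ => 84 * (1 - r) ^ ((1:ℝ)/4) * r) (𝓝[<] 1) (𝓝[>] 0) := by
    refine tendsto_nhdsWithin_of_tendsto_nhds_of_eventually_within _
      (tendsto_nhdsWithin_of_tendsto_nhds <|
        Continuous.tendsto' (by fun_prop (disch := norm_num)) 1 0 (by norm_num)) ?_
    filter_upwards [Ioo_mem_nhdsLT (show (0:ℝ) < 1 by norm_num)] with r hr
    have : 0 < 1 - r := sub_pos.2 hr.2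
    exact mul_pos (by positivity) hr.1
  exact (hN.pos_mul_atTop (by norm_num) hD.inv_tendsto_nhdsGT_zero).congr
    fun r => (div_eq_mul_inv _ _).symm

/-- t is strictly increasing on [1/2,1), t(1/2) = 0, t(r) → +∞ as
r → 1⁻, and for every t₀ ≥ 0 there is a unique r ∈ [1/2,1) with t(r) = t₀. -/
theorem stmt9 :
    StrictMonoOn tFun (Set.Ico (1/2 : ℝ) 1) ∧
    tFun (1/2) = 0 ∧
    Tendsto tFun (nhdsWithin 1 (Set.Iio 1)) atTop ∧
    ∀ t₀ : ℝ, 0 ≤ t₀ → ∃! r : ℝ, r ∈ Set.Ico (1/2:ℝ) 1 ∧ tFun r = t₀ :=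
  ⟨strictMonoOn_tFun, tFun_half, tendsto_tFun_nhdsLT_one, fun _ ht₀ =>
    strictMonoOn_tFun.existsUnique_eq_of_tendsto_atTop (by norm_num) continuousOn_tFun
      tendsto_tFun_nhdsLT_one (tFun_half ▸ ht₀)⟩
end

section
/- Let N ≥ 2, 0 < r₀ < r. The function ρ(s) = (r^{N−1} − r₀^{N−1}) s/(r^N − r₀^N) + (r − r₀) r₀^{N−1} r^{N−1}/((r^N − r₀^N) s^{N−1}) satisfies ρ(r₀) = 1 and ρ(r) = 1, solves ρ' + (N−1)ρ/s = N(r^{N−1} − r₀^{N−1})/(r^N − r₀^N) on (0,∞), and obeys 0 < ρ(s) ≤ 1 for all s ∈ [r₀, r]. -/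
/-- ρ(s) = (r^{N-1}-r₀^{N-1})s/(r^N-r₀^N) + (r-r₀)r₀^{N-1}r^{N-1}/((r^N-r₀^N)s^{N-1}). -/
noncomputable def rho11 (N : ℕ) (r₀ r : ℝ) (s : ℝ) : ℝ :=
  (r^(N-1) - r₀^(N-1)) * s / (r^N - r₀^N) +
    (r - r₀) * r₀^(N-1) * r^(N-1) / (r^N - r₀^N) * s ^ (1 - (N:ℤ))

/-!
Writing ρ(s) = A s + B s^(1-N), the identity f' - m f / s = (1 - m) A for f(s) = A s + B s^m
gives the differential equation with m = 1 - N. For N ≥ 2 and 0 < r₀ < r both A and B are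
positive, so ρ is positive and convex on (0, ∞); being 1 at r₀ and at r, it is at most 1 between.
-/

open Set

section LinearAddZpow

variable (A B : ℝ) (m : ℤ)

theorem hasDerivAt_mul_add_mul_zpow {s : ℝ} (hs : s ≠ 0) :
    HasDerivAt (fun x : ℝ => A * x + B * x ^ m) ((1 - m) * A + m * (A * s + B * s ^ m) / s) s := by
  refine (((hasDerivAt_id s).const_mul A).add
    ((hasDerivAt_zpow m s (.inl hs)).const_mul B)).congr_deriv ?_
  rw [zpow_sub_one₀ hs]
  field_simp
  ring

theorem convexOn_mul_add_mul_zpow (hB : 0 ≤ B) :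
    ConvexOn ℝ (Ioi 0) fun x : ℝ => A * x + B * x ^ m :=
  ((LinearMap.mul ℝ ℝ A).convexOn (convex_Ioi 0)).add ((convexOn_zpow m).smul hB)

end LinearAddZpow

theorem pow_sub_pow_pos {R : Type*} [Ring R] [LinearOrder R] [IsStrictOrderedRing R] {a b : R}
    {n : ℕ} (hn : n ≠ 0) (ha : 0 ≤ a) (hab : a < b) :
    0 < b ^ n - a ^ n :=
  sub_pos.mpr (pow_lt_pow_left₀ hab ha hn)

section Rho

variable (N : ℕ) (r₀ r : ℝ)

theorem rho11_eq : rho11 N r₀ r = fun s =>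
    (r ^ (N - 1) - r₀ ^ (N - 1)) / (r ^ N - r₀ ^ N) * s +
      (r - r₀) * r₀ ^ (N - 1) * r ^ (N - 1) / (r ^ N - r₀ ^ N) * s ^ (1 - (N : ℤ)) := by
  ext s; rw [rho11, mul_div_right_comm]

variable {N r₀ r}

theorem rho11_left (hN : 1 ≤ N) (h0 : r₀ ≠ 0) (hD : r ^ N - r₀ ^ N ≠ 0) : rho11 N r₀ r r₀ = 1 := by
  obtain ⟨n, rfl⟩ := Nat.exists_eq_add_of_le' hN
  rw [rho11, zpow_one_sub_natCast₀ h0]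
  simp only [Nat.add_sub_cancel]
  field_simp
  ring

theorem rho11_right (hN : 1 ≤ N) (hr : r ≠ 0) (hD : r ^ N - r₀ ^ N ≠ 0) : rho11 N r₀ r r = 1 := by
  obtain ⟨n, rfl⟩ := Nat.exists_eq_add_of_le' hN
  rw [rho11, zpow_one_sub_natCast₀ hr]
  simp only [Nat.add_sub_cancel]
  field_simp
  ring

theorem hasDerivAt_rho11 {s : ℝ} (hs : s ≠ 0) : HasDerivAt (rho11 N r₀ r)
      ((N:ℝ) * (r^(N-1) - r₀^(N-1)) / (r^N - r₀^N) - ((N:ℝ)-1) * rho11 N r₀ r s / s) s := by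
  rw [rho11_eq]
  convert hasDerivAt_mul_add_mul_zpow _ _ (1 - (N : ℤ)) hs using 1
  push_cast
  ring

theorem rho11_coeffs_pos (hN : 2 ≤ N) (h0 : 0 < r₀) (hr : r₀ < r) :
    0 < (r ^ (N - 1) - r₀ ^ (N - 1)) / (r ^ N - r₀ ^ N) ∧
      0 < (r - r₀) * r₀ ^ (N - 1) * r ^ (N - 1) / (r ^ N - r₀ ^ N) := by
  have hD := pow_sub_pow_pos (n := N) (by omega) h0.le hr
  exact ⟨div_pos (pow_sub_pow_pos (by omega) h0.le hr) hD,
    div_pos (by have := h0.trans hr; positivity) hD⟩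

theorem rho11_pos (hN : 2 ≤ N) (h0 : 0 < r₀) (hr : r₀ < r) {s : ℝ} (hs : 0 < s) :
    0 < rho11 N r₀ r s := by
  obtain ⟨hA, hB⟩ := rho11_coeffs_pos hN h0 hr
  rw [rho11_eq]
  positivity

theorem rho11_le_one (hN : 2 ≤ N) (h0 : 0 < r₀) (hr : r₀ < r) {s : ℝ} (hs : s ∈ Icc r₀ r) :
    rho11 N r₀ r s ≤ 1 := by
  have hconv : ConvexOn ℝ (Ioi 0) (rho11 N r₀ r) := by
    rw [rho11_eq]
    exact convexOn_mul_add_mul_zpow _ _ _ (rho11_coeffs_pos hN h0 hr).2.le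
  have hD : r ^ N - r₀ ^ N ≠ 0 := (pow_sub_pow_pos (by omega) h0.le hr).ne'
  calc rho11 N r₀ r s ≤ max (rho11 N r₀ r r₀) (rho11 N r₀ r r) :=
        hconv.le_max_of_mem_Icc h0 (h0.trans hr) hs
    _ = 1 := by rw [rho11_left (by omega) h0.ne' hD, rho11_right (by omega) (h0.trans hr).ne' hD,
        max_self]

end Rho

/-- for N ≥ 2, 0 < r₀ < r, ρ(r₀) = ρ(r) = 1, ρ solves
ρ' + (N-1)ρ/s = N(r^{N-1}-r₀^{N-1})/(r^N-r₀^N) on (0,∞), and 0 < ρ ≤ 1 on [r₀,r]. -/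
theorem stmt11 (N : ℕ) (hN : 2 ≤ N) (r₀ r : ℝ) (h0 : 0 < r₀) (hr : r₀ < r) :
    rho11 N r₀ r r₀ = 1 ∧ rho11 N r₀ r r = 1 ∧
    (∀ s : ℝ, 0 < s → HasDerivAt (rho11 N r₀ r)
      ((N:ℝ) * (r^(N-1) - r₀^(N-1)) / (r^N - r₀^N) - ((N:ℝ)-1) * rho11 N r₀ r s / s) s) ∧
    ∀ s ∈ Set.Icc r₀ r, 0 < rho11 N r₀ r s ∧ rho11 N r₀ r s ≤ 1 := by
  have hD : r ^ N - r₀ ^ N ≠ 0 := (pow_sub_pow_pos (by omega) h0.le hr).ne'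
  refine ⟨rho11_left (by omega) h0.ne' hD, rho11_right (by omega) (h0.trans hr).ne' hD,
    fun s hs => hasDerivAt_rho11 hs.ne',
    fun s hs => ⟨rho11_pos hN h0 hr (h0.trans_le hs.1), rho11_le_one hN h0 hr hs⟩⟩
end
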